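/- For every integer n ≥ 1, every b ∈ (0,1], and every x > 0, the function φ_{n,b} is strictly positive and satisfies 0 < φ_{n,b}(x) ≤ 2π·e^{−(1−b)x}. -/

import Mathlib

/-!
Write `g t = exp (-x * √(1 + b² - 2bt))`, so that `φ_{n,b}(x) = ∫ g (cos η) cos (nη) dη`.
Every derivative of `g` is `g` times a polynomial with nonnegative coefficients in
`1 / √(1 + b² - 2bt)`, hence positive on `t < 1`. For such an absolutely monotone function
Bernstein's argument applies: the integral Taylor remainder at `0`, rescaled to `[0, 1]`, grows
with `|t|`, so the remainder at `t` is at most `(|t| / r) ^ (K + 1) * g r` for `|t| < r < 1`, and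
the Taylor series of `g` at `0` converges to `g` on `(-1, 1)`. Its coefficients `c_j ≥ 0` are
summable, since the partial sums at `r < 1` are bounded by `g r ≤ 1`. Dominated convergence then
gives `φ_{n,b}(x) = ∑ c_j ∫ cos^j η cos (nη) dη`. By
`cos η cos (mη) = (cos ((m+1)η) + cos ((m-1)η)) / 2` all these moments are nonnegative and the
`j = n` one is positive. The upper bound comes from `√(1 + b² - 2b cos η) ≥ 1 - b`.
-/

open MeasureTheory Real Set Filter Topology Polynomial
open scoped Nat

noncomputable section

namespace DCV5

/-- The universal function `φ_{n,b}(x) = ∫_0^{2π} e^{−x·√(1+b²−2b·cos η)} cos(nη) dη`. -/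
def phib (n : ℕ) (b x : ℝ) : ℝ :=
  ∫ η in (0:ℝ)..(2*π), Real.exp (-x * Real.sqrt (1 + b^2 - 2*b*Real.cos η)) * Real.cos (n*η)

def IsDerivChainOn (F : ℕ → ℝ → ℝ) (s : Set ℝ) : Prop :=
  ∀ j, ∀ t ∈ s, HasDerivAt (F j) (F (j + 1) t) t

theorem integral_taylorKernel_eq_pow_mul (G : ℝ → ℝ) (K : ℕ) (t : ℝ) :
    ∫ s in (0 : ℝ)..t, (t - s) ^ K / K ! * G s =
      t ^ (K + 1) * ∫ u in (0 : ℝ)..1, (1 - u) ^ K / K ! * G (t * u) := by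
  have h := intervalIntegral.smul_integral_comp_mul_left
    (fun s => (t - s) ^ K / K ! * G s) t (a := 0) (b := 1)
  simp only [mul_zero, mul_one, smul_eq_mul] at h
  have hscale : (fun u => (t - t * u) ^ K / K ! * G (t * u)) =
      fun u => t ^ K * ((1 - u) ^ K / K ! * G (t * u)) := by
    funext u
    rw [show t - t * u = t * (1 - u) by ring, mul_pow]
    ring
  rw [← h, hscale, intervalIntegral.integral_const_mul]
  ring

theorem mul_mem_Ioo_of_abs_le {ρ c r u : ℝ} (hc : |c| ≤ r) (hr : r < ρ)
    (hu : u ∈ Icc (0 : ℝ) 1) : c * u ∈ Ioo (-ρ) ρ := by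
  refine abs_lt.mp ?_
  rw [abs_mul, abs_of_nonneg hu.1]
  nlinarith [abs_nonneg c, hu.2, hu.1]

theorem taylorSeries_term_nonneg {F : ℕ → ℝ → ℝ} {ρ : ℝ} (hρ : 0 < ρ)
    (hF₀ : ∀ j, ∀ t ∈ Ioo (-ρ) ρ, 0 ≤ F j t) (j : ℕ) {t : ℝ} (ht : 0 ≤ t) :
    0 ≤ F j 0 / j ! * t ^ j :=
  mul_nonneg (div_nonneg (hF₀ j 0 ⟨neg_lt_zero.mpr hρ, hρ⟩) (by positivity))
    (pow_nonneg ht j)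

namespace IsDerivChainOn

variable {F : ℕ → ℝ → ℝ} {s : Set ℝ}

theorem mono {s' : Set ℝ} (h : IsDerivChainOn F s) (hs : s' ⊆ s) : IsDerivChainOn F s' :=
  fun j t ht => h j t (hs ht)

theorem continuousOn (h : IsDerivChainOn F s) (j : ℕ) : ContinuousOn (F j) s :=
  fun t ht => (h j t ht).continuousAt.continuousWithinAt

theorem contDiffOn (h : IsDerivChainOn F s) (hs : IsOpen s) (K : ℕ) :
    ∀ j, ContDiffOn ℝ K (F j) s := by
  induction K with
  | zero => exact fun j => contDiffOn_zero.mpr (h.continuousOn j)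
  | succ K ih =>
    intro j
    rw [Nat.cast_succ, contDiffOn_succ_iff_deriv_of_isOpen hs]
    refine ⟨fun t ht => (h j t ht).differentiableAt.differentiableWithinAt, by simp, ?_⟩
    exact (ih (j + 1)).congr fun t ht => (h j t ht).deriv

theorem iteratedDerivWithin_eq (h : IsDerivChainOn F s) (hs : UniqueDiffOn ℝ s) (j : ℕ)
    {t : ℝ} (ht : t ∈ s) : iteratedDerivWithin j (F 0) s t = F j t := by
  induction j generalizing t with
  | zero => simp
  | succ j ih =>
    rw [iteratedDerivWithin_succ, derivWithin_congr (fun _ hu => ih hu) (ih ht)]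
    exact (h j t ht).hasDerivWithinAt.derivWithin (hs t ht)

theorem monotoneOn (h : IsDerivChainOn F s) (hs : IsOpen s) (hconv : Convex ℝ s) {j : ℕ}
    (hnonneg : ∀ t ∈ s, 0 ≤ F (j + 1) t) : MonotoneOn (F j) s := by
  refine monotoneOn_of_hasDerivWithinAt_nonneg hconv (h.continuousOn j) (fun t ht => ?_)
    (fun t ht => hnonneg t (interior_subset ht))
  rw [hs.interior_eq] at ht ⊢
  exact (h j t ht).hasDerivWithinAt

theorem taylor_integral_remainder (h : IsDerivChainOn F s) (hs : IsOpen s) {u v : ℝ}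
    (huv : uIcc u v ⊆ s) (K : ℕ) :
    F 0 v - ∑ j ∈ Finset.range (K + 1), F j u * (v - u) ^ j / j ! =
      ∫ t in u..v, (v - t) ^ K / K ! * F (K + 1) t := by
  rcases eq_or_ne u v with rfl | hne
  · simp [Finset.sum_range_succ', zero_pow_eq]
  have hu : UniqueDiffOn ℝ (uIcc u v) := uniqueDiffOn_uIcc hne
  have hchain := h.mono huv
  have key := _root_.taylor_integral_remainder ((h.contDiffOn hs (K + 1) 0).mono huv)
  have hsum : ∑ k ∈ Finset.range (K + 1),
      ((k ! : ℝ)⁻¹ * (v - u) ^ k) • iteratedDerivWithin k (F 0) (uIcc u v) u =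
      ∑ j ∈ Finset.range (K + 1), F j u * (v - u) ^ j / j ! :=
    Finset.sum_congr rfl fun j _ => by
      rw [hchain.iteratedDerivWithin_eq hu j left_mem_uIcc, smul_eq_mul]
      ring
  rw [taylor_within_apply, hsum] at key
  rw [key]
  exact intervalIntegral.integral_congr fun t ht => by
    simp only [smul_eq_mul, hchain.iteratedDerivWithin_eq hu (K + 1) ht]

theorem sub_sum_taylorSeries_eq_integral {ρ : ℝ} (hF : IsDerivChainOn F (Ioo (-ρ) ρ)) {t : ℝ}
    (ht : |t| < ρ) (K : ℕ) :
    F 0 t - ∑ j ∈ Finset.range (K + 1), F j 0 / j ! * t ^ j =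
      ∫ s in (0 : ℝ)..t, (t - s) ^ K / K ! * F (K + 1) s := by
  have hsub : uIcc 0 t ⊆ Ioo (-ρ) ρ := fun s hs => by
    have := abs_sub_left_of_mem_uIcc hs
    rw [sub_zero, sub_zero] at this
    exact abs_lt.mp (this.trans_lt ht)
  rw [← hF.taylor_integral_remainder isOpen_Ioo hsub K]
  simp only [sub_zero, div_mul_eq_mul_div]

theorem abs_integral_taylorKernel_mul_pow_le {ρ : ℝ} (hF : IsDerivChainOn F (Ioo (-ρ) ρ))
    (hF₀ : ∀ j, ∀ t ∈ Ioo (-ρ) ρ, 0 ≤ F j t) (K : ℕ) {t r : ℝ} (htr : |t| ≤ r) (hr : r < ρ) :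
    |∫ s in (0 : ℝ)..t, (t - s) ^ K / K ! * F (K + 1) s| * r ^ (K + 1) ≤
      |t| ^ (K + 1) * ∫ s in (0 : ℝ)..r, (r - s) ^ K / K ! * F (K + 1) s := by
  have hr₀ : 0 ≤ r := (abs_nonneg t).trans htr
  have hmono : MonotoneOn (F (K + 1)) (Ioo (-ρ) ρ) :=
    hF.monotoneOn isOpen_Ioo (convex_Ioo _ _) (hF₀ (K + 2))
  have hint : ∀ c, |c| ≤ r →
      IntervalIntegrable (fun u => (1 - u) ^ K / K ! * F (K + 1) (c * u)) volume 0 1 := by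
    intro c hc
    refine ContinuousOn.intervalIntegrable ?_
    rw [uIcc_of_le zero_le_one]
    exact ContinuousOn.mul (by fun_prop) ((hF.continuousOn (K + 1)).comp (by fun_prop)
      fun u hu => mul_mem_Ioo_of_abs_le hc hr hu)
  have hcompare : |∫ u in (0 : ℝ)..1, (1 - u) ^ K / K ! * F (K + 1) (t * u)| ≤
      ∫ u in (0 : ℝ)..1, (1 - u) ^ K / K ! * F (K + 1) (r * u) := by
    refine (intervalIntegral.abs_integral_le_integral_abs zero_le_one).trans
      (intervalIntegral.integral_mono_on zero_le_one (hint t htr).abs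
        (hint r (abs_of_nonneg hr₀).le) fun u hu => ?_)
    have htu := mul_mem_Ioo_of_abs_le htr hr hu
    have hru := mul_mem_Ioo_of_abs_le (abs_of_nonneg hr₀).le hr hu
    have hle : t * u ≤ r * u := mul_le_mul_of_nonneg_right ((le_abs_self t).trans htr) hu.1
    have hw : 0 ≤ (1 - u) ^ K / K ! :=
      div_nonneg (pow_nonneg (by linarith [hu.2]) K) (by positivity)
    rw [abs_mul, abs_of_nonneg hw, abs_of_nonneg (hF₀ _ _ htu)]
    exact mul_le_mul_of_nonneg_left (hmono htu hru hle) hw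
  rw [integral_taylorKernel_eq_pow_mul _ K t, integral_taylorKernel_eq_pow_mul _ K r, abs_mul,
    abs_pow, mul_right_comm, mul_assoc]
  gcongr

theorem sum_taylorSeries_le {ρ : ℝ} (hF : IsDerivChainOn F (Ioo (-ρ) ρ))
    (hF₀ : ∀ j, ∀ t ∈ Ioo (-ρ) ρ, 0 ≤ F j t) {t : ℝ} (ht₀ : 0 ≤ t) (ht : t < ρ) (n : ℕ) :
    ∑ j ∈ Finset.range n, F j 0 / j ! * t ^ j ≤ F 0 t := by
  have hrem := hF.sub_sum_taylorSeries_eq_integral (abs_of_nonneg ht₀ ▸ ht) n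
  have hint : 0 ≤ ∫ s in (0 : ℝ)..t, (t - s) ^ n / n ! * F (n + 1) s :=
    intervalIntegral.integral_nonneg ht₀ fun s hs =>
      mul_nonneg (div_nonneg (pow_nonneg (by linarith [hs.2]) n) (by positivity))
        (hF₀ _ _ ⟨by linarith [hs.1], by linarith [hs.2]⟩)
  have hlast := taylorSeries_term_nonneg (ht₀.trans_lt ht) hF₀ n ht₀
  rw [Finset.sum_range_succ] at hrem
  linarith

theorem hasSum_taylorSeries {ρ : ℝ} (hF : IsDerivChainOn F (Ioo (-ρ) ρ))
    (hF₀ : ∀ j, ∀ t ∈ Ioo (-ρ) ρ, 0 ≤ F j t) {t : ℝ} (ht : |t| < ρ) :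
    HasSum (fun j => F j 0 / j ! * t ^ j) (F 0 t) := by
  have hρ : 0 < ρ := (abs_nonneg t).trans_lt ht
  set r := (|t| + ρ) / 2
  have htr : |t| < r := by simp only [r]; linarith
  have hr : r < ρ := by simp only [r]; linarith
  have hr₀ : 0 < r := (abs_nonneg t).trans_lt htr
  have hsummable : Summable fun j => ‖F j 0 / j ! * t ^ j‖ := by
    refine summable_of_sum_range_le (c := F 0 |t|) (fun j => norm_nonneg _) fun n => ?_
    refine le_of_eq_of_le (Finset.sum_congr rfl fun j _ => ?_)
      (hF.sum_taylorSeries_le hF₀ (abs_nonneg t) ht n)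
    rw [norm_mul, norm_pow, Real.norm_eq_abs, Real.norm_eq_abs,
      abs_of_nonneg (div_nonneg (hF₀ j 0 ⟨neg_lt_zero.mpr hρ, hρ⟩) (by positivity))]
  rw [hasSum_iff_tendsto_nat_of_summable_norm hsummable, ← tendsto_add_atTop_iff_nat 1,
    tendsto_iff_norm_sub_tendsto_zero]
  have hgeom : Tendsto (fun K : ℕ => (|t| / r) ^ (K + 1) * F 0 r) atTop (𝓝 0) := by
    simpa using ((tendsto_pow_atTop_nhds_zero_of_lt_one (by positivity)
      ((div_lt_one hr₀).mpr htr)).comp (tendsto_add_atTop_nat 1)).mul_const (F 0 r)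
  refine squeeze_zero (fun _ => norm_nonneg _) (fun K => ?_) hgeom
  have hbound := hF.abs_integral_taylorKernel_mul_pow_le hF₀ K htr.le hr
  rw [← hF.sub_sum_taylorSeries_eq_integral ht,
    ← hF.sub_sum_taylorSeries_eq_integral (by rwa [abs_of_pos hr₀])] at hbound
  have hsum_r : 0 ≤ ∑ j ∈ Finset.range (K + 1), F j 0 / j ! * r ^ j :=
    Finset.sum_nonneg fun j _ => taylorSeries_term_nonneg hρ hF₀ j hr₀.le
  rw [norm_sub_rev, Real.norm_eq_abs, div_pow, div_mul_eq_mul_div, le_div_iff₀ (by positivity)]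
  exact hbound.trans (mul_le_mul_of_nonneg_left (by linarith) (by positivity))

theorem summable_taylorSeries_of_le {ρ M : ℝ} (hρ : 0 < ρ) (hF : IsDerivChainOn F (Ioo (-ρ) ρ))
    (hF₀ : ∀ j, ∀ t ∈ Ioo (-ρ) ρ, 0 ≤ F j t) (hM : ∀ r ∈ Ioo 0 ρ, F 0 r ≤ M) :
    Summable fun j => F j 0 / j ! * ρ ^ j := by
  refine summable_of_sum_range_le (c := M)
    (fun j => taylorSeries_term_nonneg hρ hF₀ j hρ.le) fun n => ?_
  have hcont : Continuous fun r : ℝ => ∑ j ∈ Finset.range n, F j 0 / j ! * r ^ j := by fun_prop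
  refine le_of_tendsto ((hcont.tendsto ρ).mono_left (nhdsWithin_le_nhds (s := Iio ρ))) ?_
  filter_upwards [Ioo_mem_nhdsLT hρ] with r hr
  exact (hF.sum_taylorSeries_le hF₀ hr.1.le hr.2 n).trans (hM r hr)

end IsDerivChainOn

theorem _root_.Polynomial.eval_nonneg_of_coeff_nonneg {R : Type*} [CommSemiring R]
    [PartialOrder R] [IsOrderedRing R] {p : R[X]} (hp : ∀ i, 0 ≤ p.coeff i) {w : R}
    (hw : 0 ≤ w) : 0 ≤ p.eval w := by
  rw [eval_eq_sum_range]
  exact Finset.sum_nonneg fun i _ => mul_nonneg (hp i) (pow_nonneg hw i)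

theorem _root_.Polynomial.coeff_derivative_nonneg {R : Type*} [CommSemiring R]
    [PartialOrder R] [IsOrderedRing R] {p : R[X]} (hp : ∀ i, 0 ≤ p.coeff i) (i : ℕ) :
    0 ≤ (derivative p).coeff i := by
  rw [coeff_derivative]
  exact mul_nonneg (hp _) (add_nonneg (Nat.cast_nonneg _) zero_le_one)

/-- `chord b (cos η) = |1 - b e^{iη}|`. -/
def chord (b t : ℝ) : ℝ := √(1 + b ^ 2 - 2 * b * t)

def chordExpPoly (b x : ℝ) : ℕ → ℝ[X]
  | 0 => 1
  | k + 1 => C b * (C x * X * chordExpPoly b x k + X ^ 3 * derivative (chordExpPoly b x k))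

/-- The `k`-th derivative of `t ↦ exp (-x * chord b t)`: the recursion defining `chordExpPoly`
is the chain rule with `chord' = -b / chord`. -/
def chordExpDeriv (b x : ℝ) (k : ℕ) (t : ℝ) : ℝ :=
  exp (-x * chord b t) * (chordExpPoly b x k).eval (chord b t)⁻¹

theorem chordExpPoly_coeff_nonneg {b x : ℝ} (hb : 0 ≤ b) (hx : 0 ≤ x) (k i : ℕ) :
    0 ≤ (chordExpPoly b x k).coeff i := by
  induction k generalizing i with
  | zero => simp only [chordExpPoly, coeff_one]; split <;> norm_num
  | succ k ih =>
    rw [chordExpPoly, coeff_C_mul, coeff_add, mul_assoc, coeff_C_mul, coeff_X_pow_mul']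
    refine mul_nonneg hb (add_nonneg ?_ ?_)
    · cases i with
      | zero => simp
      | succ i => exact mul_nonneg hx (by rw [coeff_X_mul]; exact ih i)
    · split
      · exact coeff_derivative_nonneg ih _
      · exact le_rfl

theorem chordExpPoly_eval_pos {b x : ℝ} (hb : 0 < b) (hx : 0 < x) (k : ℕ) {w : ℝ}
    (hw : 0 < w) : 0 < (chordExpPoly b x k).eval w := by
  induction k with
  | zero => simp [chordExpPoly]
  | succ k ih =>
    have hderiv : 0 ≤ (derivative (chordExpPoly b x k)).eval w :=
      eval_nonneg_of_coeff_nonneg (coeff_derivative_nonneg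
        (chordExpPoly_coeff_nonneg hb.le hx.le k)) hw.le
    simp only [chordExpPoly, eval_mul, eval_C, eval_add, eval_X, eval_pow]
    positivity

theorem chord_sq_pos {b t : ℝ} (hb : 0 < b) (ht : t < 1) : 0 < 1 + b ^ 2 - 2 * b * t := by
  nlinarith [sq_nonneg (1 - b)]

theorem chord_pos {b t : ℝ} (hb : 0 < b) (ht : t < 1) : 0 < chord b t :=
  sqrt_pos.mpr (chord_sq_pos hb ht)

theorem one_sub_le_chord {b : ℝ} (hb : 0 ≤ b) (η : ℝ) : 1 - b ≤ chord b (cos η) :=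
  (le_abs_self _).trans (abs_le_sqrt (by nlinarith [cos_le_one η]))

theorem hasDerivAt_chord {b t : ℝ} (hb : 0 < b) (ht : t < 1) :
    HasDerivAt (chord b) (-b * (chord b t)⁻¹) t := by
  have hinner : HasDerivAt (fun s : ℝ => 1 + b ^ 2 - 2 * b * s) (-(2 * b)) t := by
    simpa using ((hasDerivAt_id t).const_mul (2 * b)).const_sub (1 + b ^ 2)
  refine ((hasDerivAt_sqrt (chord_sq_pos hb ht).ne').comp t hinner).congr_deriv ?_
  have := chord_pos hb ht
  simp only [chord] at this ⊢
  field_simp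

theorem isDerivChainOn_chordExpDeriv {b : ℝ} (hb : 0 < b) (x : ℝ) :
    IsDerivChainOn (chordExpDeriv b x) (Iio 1) := by
  intro k t ht
  have hS := hasDerivAt_chord hb ht
  refine ((hS.const_mul (-x)).exp.mul ((chordExpPoly b x k).hasDerivAt _ |>.comp t
    (hS.inv (chord_pos hb ht).ne'))).congr_deriv ?_
  simp only [chordExpDeriv, chordExpPoly, eval_mul, eval_C, eval_add, eval_X, eval_pow,
    Function.comp_apply, Pi.inv_apply]
  field_simp

theorem chordExpDeriv_pos {b x : ℝ} (hb : 0 < b) (hx : 0 < x) (k : ℕ) {t : ℝ} (ht : t < 1) :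
    0 < chordExpDeriv b x k t :=
  mul_pos (exp_pos _) (chordExpPoly_eval_pos hb hx k (inv_pos.mpr (chord_pos hb ht)))

theorem chordExpDeriv_zero_le_one (b : ℝ) {x : ℝ} (hx : 0 ≤ x) (t : ℝ) :
    chordExpDeriv b x 0 t ≤ 1 := by
  rw [chordExpDeriv, chordExpPoly, eval_one, mul_one, exp_le_one_iff]
  exact mul_nonpos_of_nonpos_of_nonneg (neg_nonpos.mpr hx) (sqrt_nonneg _)

def cosMoment (k : ℕ) (m : ℤ) : ℝ := ∫ η in (0 : ℝ)..2 * π, cos η ^ k * cos (m * η)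

theorem cosMoment_zero (m : ℤ) : cosMoment 0 m = if m = 0 then 2 * π else 0 := by
  split_ifs with hm
  · simp [cosMoment, hm]
  have hm' : (m : ℝ) ≠ 0 := Int.cast_ne_zero.mpr hm
  have hsin : sin (m * (2 * π)) = 0 := by
    rw [show (m : ℝ) * (2 * π) = ((2 * m : ℤ) : ℝ) * π by push_cast; ring, sin_int_mul_pi]
  simp [cosMoment, intervalIntegral.integral_comp_mul_left (fun η => cos η) hm', hsin]

theorem cosMoment_succ (k : ℕ) (m : ℤ) :
    cosMoment (k + 1) m = (cosMoment k (m + 1) + cosMoment k (m - 1)) / 2 := by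
  have hint (m' : ℤ) :
      IntervalIntegrable (fun η => cos η ^ k * cos (m' * η)) volume 0 (2 * π) :=
    (by fun_prop : Continuous fun η => cos η ^ k * cos (m' * η)).intervalIntegrable _ _
  rw [cosMoment, cosMoment, cosMoment, ← intervalIntegral.integral_add (hint _) (hint _),
    ← intervalIntegral.integral_div]
  refine intervalIntegral.integral_congr fun η _ => ?_
  push_cast
  rw [add_mul, sub_mul, one_mul, cos_add, cos_sub]
  ring

theorem cosMoment_nonneg (k : ℕ) (m : ℤ) : 0 ≤ cosMoment k m := by
  induction k generalizing m with
  | zero => rw [cosMoment_zero]; split_ifs <;> positivity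
  | succ k ih => rw [cosMoment_succ]; linarith [ih (m + 1), ih (m - 1)]

theorem cosMoment_self_pos (k : ℕ) : 0 < cosMoment k k := by
  induction k with
  | zero => simp [cosMoment_zero, pi_pos]
  | succ k ih =>
    rw [cosMoment_succ]
    push_cast
    rw [add_sub_cancel_right]
    linarith [cosMoment_nonneg k (k + 1 + 1)]

theorem ae_abs_cos_lt_one : ∀ᵐ η : ℝ, |cos η| < 1 := by
  refine measure_mono_null (fun η (hη : ¬ |cos η| < 1) => ?_)
    ((countable_range fun k : ℤ => (k : ℝ) * π).measure_zero volume)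
  have hsin : sin η = 0 := by
    nlinarith [sin_sq_add_cos_sq η, sq_abs (cos η), abs_cos_le_one η, sq_nonneg (sin η)]
  exact sin_eq_zero_iff.mp hsin

theorem phib_eq_integral_chordExpDeriv (n : ℕ) (b x : ℝ) :
    phib n b x = ∫ η in (0 : ℝ)..2 * π, chordExpDeriv b x 0 (cos η) * cos (n * η) := by
  simp [phib, chordExpDeriv, chordExpPoly, chord]

theorem hasSum_phib {b x : ℝ} (hb : 0 < b) (hx : 0 < x) (n : ℕ) :
    HasSum (fun j => chordExpDeriv b x j 0 / j ! * cosMoment j n) (phib n b x) := by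
  set c : ℕ → ℝ := fun j => chordExpDeriv b x j 0 / (j ! : ℝ)
  have hF := (isDerivChainOn_chordExpDeriv hb x).mono (Ioo_subset_Iio_self (a := -1))
  have hF₀ : ∀ j, ∀ t ∈ Ioo (-1 : ℝ) 1, 0 ≤ chordExpDeriv b x j t :=
    fun j t ht => (chordExpDeriv_pos hb hx j ht.2).le
  have hc₀ (j : ℕ) : 0 ≤ c j := by
    simpa using taylorSeries_term_nonneg one_pos hF₀ j zero_le_one
  have hc : Summable c := by
    simpa using hF.summable_taylorSeries_of_le one_pos hF₀
      fun r _ => chordExpDeriv_zero_le_one b hx.le r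
  have hterm (j : ℕ) :
      ∫ η in (0 : ℝ)..2 * π, c j * (cos η ^ j * cos (n * η)) = c j * cosMoment j n := by
    rw [intervalIntegral.integral_const_mul, cosMoment, Int.cast_natCast]
  rw [← funext hterm, phib_eq_integral_chordExpDeriv]
  refine intervalIntegral.hasSum_integral_of_dominated_convergence (fun j _ => c j)
    (fun j => Continuous.aestronglyMeasurable
      (by fun_prop : Continuous fun η => c j * (cos η ^ j * cos (n * η))))
    (fun j => ae_of_all _ fun η _ => ?_) (ae_of_all _ fun _ _ => hc) intervalIntegrable_const
    (ae_abs_cos_lt_one.mono fun η hη _ => ?_)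
  · have h1 : ‖cos η‖ ^ j ≤ 1 := pow_le_one₀ (norm_nonneg _) (abs_cos_le_one η)
    have h2 : ‖cos (n * η)‖ ≤ 1 := abs_cos_le_one _
    rw [norm_mul, norm_mul, norm_pow, Real.norm_eq_abs, abs_of_nonneg (hc₀ j)]
    simpa using mul_le_mul_of_nonneg_left (mul_le_one₀ h1 (norm_nonneg _) h2) (hc₀ j)
  · simpa only [mul_assoc] using (hF.hasSum_taylorSeries hF₀ hη).mul_right (cos (n * η))

theorem phib_pos (n : ℕ) {b x : ℝ} (hb : 0 < b) (hx : 0 < x) : 0 < phib n b x := by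
  have hterm : 0 < chordExpDeriv b x n 0 / (n ! : ℝ) * cosMoment n n :=
    mul_pos (div_pos (chordExpDeriv_pos hb hx n one_pos) (by positivity)) (cosMoment_self_pos n)
  refine hterm.trans_le (le_hasSum (hasSum_phib hb hx n) n fun j _ => ?_)
  exact mul_nonneg (div_nonneg (chordExpDeriv_pos hb hx j one_pos).le (by positivity))
    (cosMoment_nonneg j n)

theorem phib_le (n : ℕ) {b x : ℝ} (hb : 0 ≤ b) (hx : 0 ≤ x) :
    phib n b x ≤ 2 * π * exp (-(1 - b) * x) := by
  have hle : ∀ η ∈ Icc (0 : ℝ) (2 * π),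
      exp (-x * chord b (cos η)) * cos (n * η) ≤ exp (-(1 - b) * x) := fun η _ => calc
    exp (-x * chord b (cos η)) * cos (n * η) ≤ exp (-x * chord b (cos η)) :=
      mul_le_of_le_one_right (exp_pos _).le (cos_le_one _)
    _ ≤ exp (-(1 - b) * x) := exp_le_exp.mpr (by nlinarith [one_sub_le_chord hb η])
  have hint := intervalIntegral.integral_mono_on (μ := volume) (by positivity)
    ((by unfold chord; fun_prop : Continuous fun η => exp (-x * chord b (cos η)) *
      cos (n * η)).intervalIntegrable _ _) intervalIntegrable_const hle
  simpa [phib, chord] using hint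

theorem positivity_and_bound_of_phib_general (n : ℕ) (b : ℝ) (hb : b ∈ Set.Ioc (0:ℝ) 1)
    (x : ℝ) (hx : 0 < x) :
    0 < phib n b x ∧ phib n b x ≤ 2 * π * Real.exp (-(1-b)*x) :=
  ⟨phib_pos n hb.1 hx, phib_le n hb.1.le hx.le⟩

/-- For every integer `n ≥ 1`, every `b ∈ (0,1]` and every `x > 0`, the function `φ_{n,b}`
is strictly positive and satisfies `0 < φ_{n,b}(x) ≤ 2π·e^{−(1−b)x}`. -/
theorem positivity_and_bound_of_phib (n : ℕ) (hn : 1 ≤ n) (b : ℝ) (hb : b ∈ Set.Ioc (0:ℝ) 1)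
    (x : ℝ) (hx : 0 < x) :
    0 < phib n b x ∧ phib n b x ≤ 2 * π * Real.exp (-(1-b)*x) :=
  positivity_and_bound_of_phib_general n b hb x hx

end DCV5
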